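/- Let f, g ≥ 0 be spectral densities with integrable logarithms and outer spectral factors f⁺, g⁺. Then ‖f⁺ − g⁺‖²_{H²} ≥ 2∫_{-π}^{π} f(θ)(1 − cos((1/2)(log f(θ) − log g(θ))~)) dθ − 4‖f − g‖_{L¹}. -/

import Mathlib

/-! Pointwise, `‖F - G‖² = f + g - 2√f√g cos((A - B)/2)`, and with `s = √f`, `t = √g`,
`c = cos((A - B)/2)` one has `s² + t² - 2stc = (s - t)² + 2s(t - s)(1 - c) + 2s²(1 - c)`.
Dropping the square and using `|1 - c| ≤ 2` and `s|t - s| ≤ |s² - t²|` bounds the middle term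
below by `-4|f - g|`; the inequality then integrates. -/

open MeasureTheory Set

open Complex in
theorem norm_ofReal_mul_exp_sub_sq (a b x y : ℝ) :
    ‖(a : ℂ) * exp (x * I) - b * exp (y * I)‖ ^ 2
      = a ^ 2 + b ^ 2 - 2 * a * b * Real.cos (x - y) := by
  rw [exp_mul_I, exp_mul_I, ← ofReal_cos, ← ofReal_sin, ← ofReal_cos, ← ofReal_sin,
    Complex.sq_norm, normSq_apply, Real.cos_sub]
  simp only [sub_re, sub_im, mul_re, mul_im, add_re, add_im, ofReal_re, ofReal_im, I_re, I_im]
  linear_combination a ^ 2 * Real.sin_sq_add_cos_sq x + b ^ 2 * Real.sin_sq_add_cos_sq y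

theorem mul_abs_sub_le_abs_sq_sub_sq {s t : ℝ} (hs : 0 ≤ s) (ht : 0 ≤ t) :
    s * |t - s| ≤ |s ^ 2 - t ^ 2| := by
  rw [sq_sub_sq, abs_mul, abs_of_nonneg (add_nonneg hs ht), abs_sub_comm]
  exact mul_le_mul_of_nonneg_right (le_add_of_nonneg_right ht) (abs_nonneg _)

theorem two_mul_sq_mul_one_sub_sub_le {s t c : ℝ} (hs : 0 ≤ s) (ht : 0 ≤ t) (hc : |c| ≤ 1) :
    2 * s ^ 2 * (1 - c) - 4 * |s ^ 2 - t ^ 2| ≤ s ^ 2 + t ^ 2 - 2 * s * t * c := by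
  have hcross : -(2 * |s ^ 2 - t ^ 2|) ≤ s * (t - s) * (1 - c) := by
    have h1c : |1 - c| ≤ 2 := (abs_sub _ _).trans (by norm_num; linarith)
    have := mul_le_mul (mul_abs_sub_le_abs_sq_sub_sq hs ht) h1c (abs_nonneg _) (abs_nonneg _)
    rw [← abs_of_nonneg hs, ← abs_mul, ← abs_mul, abs_of_nonneg hs] at this
    linarith [neg_abs_le (s * (t - s) * (1 - c))]
  have hid : s ^ 2 + t ^ 2 - 2 * s * t * c
      = (s - t) ^ 2 + 2 * (s * (t - s) * (1 - c)) + 2 * s ^ 2 * (1 - c) := by ring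
  nlinarith [sq_nonneg (s - t)]

section HalfAngle

open Complex

variable {a b : ℝ} (x y : ℝ)

theorem norm_sqrt_mul_exp_half_sub_sq (ha : 0 ≤ a) (hb : 0 ≤ b) :
    ‖(√a : ℂ) * exp (I * x / 2) - √b * exp (I * y / 2)‖ ^ 2
      = a + b - 2 * √a * √b * Real.cos ((x - y) / 2) := by
  have half_angle (z : ℝ) : I * (z : ℂ) / 2 = ((z / 2 : ℝ) : ℂ) * I := by push_cast; ring
  rw [half_angle, half_angle, norm_ofReal_mul_exp_sub_sq, Real.sq_sqrt ha, Real.sq_sqrt hb, sub_div]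

theorem norm_sqrt_mul_exp_half_sub_sq_le (ha : 0 ≤ a) (hb : 0 ≤ b) :
    ‖(√a : ℂ) * exp (I * x / 2) - √b * exp (I * y / 2)‖ ^ 2 ≤ 2 * (a + b) := by
  have hcos := mul_le_mul_of_nonneg_left (neg_le_of_abs_le (Real.abs_cos_le_one ((x - y) / 2)))
    (mul_nonneg (Real.sqrt_nonneg a) (Real.sqrt_nonneg b))
  rw [norm_sqrt_mul_exp_half_sub_sq x y ha hb]
  nlinarith [sq_nonneg (√a - √b), Real.sq_sqrt ha, Real.sq_sqrt hb]

theorem le_norm_sqrt_mul_exp_half_sub_sq (ha : 0 ≤ a) (hb : 0 ≤ b) :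
    2 * (a * (1 - Real.cos ((x - y) / 2))) - 4 * |a - b|
      ≤ ‖(√a : ℂ) * exp (I * x / 2) - √b * exp (I * y / 2)‖ ^ 2 := by
  have := two_mul_sq_mul_one_sub_sub_le (Real.sqrt_nonneg a) (Real.sqrt_nonneg b)
    (Real.abs_cos_le_one ((x - y) / 2))
  rw [Real.sq_sqrt ha, Real.sq_sqrt hb] at this
  rw [norm_sqrt_mul_exp_half_sub_sq x y ha hb, ← mul_assoc]
  exact this

end HalfAngle

theorem stmt13_general (f g : ℝ → ℝ)
    (hf0 : ∀ θ, 0 ≤ f θ) (hg0 : ∀ θ, 0 ≤ g θ)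
    (hf : IntegrableOn f (Ico (-Real.pi) Real.pi))
    (hg : IntegrableOn g (Ico (-Real.pi) Real.pi))
    (A B : ℝ → ℝ) (hA : Measurable A) (hB : Measurable B)
    (F G : ℝ → ℂ)
    (hF : ∀ θ, F θ = (Real.sqrt (f θ) : ℂ) * Complex.exp (Complex.I * (A θ : ℂ) / 2))
    (hG : ∀ θ, G θ = (Real.sqrt (g θ) : ℂ) * Complex.exp (Complex.I * (B θ : ℂ) / 2)) :
    2 * (∫ θ in Ico (-Real.pi) Real.pi,
        f θ * (1 - Real.cos ((A θ - B θ) / 2))) -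
      4 * (∫ θ in Ico (-Real.pi) Real.pi, |f θ - g θ|) ≤
    ∫ θ in Ico (-Real.pi) Real.pi, ‖F θ - G θ‖ ^ 2 := by
  simp only [hF, hG]
  have hf_meas := hf.aemeasurable
  have hg_meas := hg.aemeasurable
  have hlhs : IntegrableOn (fun θ => f θ * (1 - Real.cos ((A θ - B θ) / 2)))
      (Ico (-Real.pi) Real.pi) :=
    hf.mul_bdd (c := 2) (by fun_prop : Measurable _).aestronglyMeasurable (ae_of_all _ fun θ => by
      rw [Real.norm_eq_abs, abs_le]
      constructor <;>
        linarith [Real.neg_one_le_cos ((A θ - B θ) / 2), Real.cos_le_one ((A θ - B θ) / 2)])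
  have hdiff : IntegrableOn (fun θ => |f θ - g θ|) (Ico (-Real.pi) Real.pi) := (hf.sub hg).abs
  have hrhs := ((hf.add hg).const_mul 2).mono' (by fun_prop : AEMeasurable _ _).aestronglyMeasurable
    (ae_of_all _ fun θ => (Real.norm_of_nonneg (sq_nonneg _)).trans_le
      (norm_sqrt_mul_exp_half_sub_sq_le (A θ) (B θ) (hf0 θ) (hg0 θ)))
  rw [← integral_const_mul, ← integral_const_mul,
    ← integral_sub (hlhs.const_mul 2) (hdiff.const_mul 4)]
  exact integral_mono ((hlhs.const_mul 2).sub (hdiff.const_mul 4)) hrhs fun θ =>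
    le_norm_sqrt_mul_exp_half_sub_sq (A θ) (B θ) (hf0 θ) (hg0 θ)

/-- Lower bound for the `H²` distance of spectral factors:
`‖f⁺ − g⁺‖²_{H²} ≥ 2∫ f(1 − cos(½(log f − log g)~)) − 4‖f − g‖_{L¹}`.
Here `F, G` are the boundary values of `f⁺, g⁺`, with `A = (log f)~`,
`B = (log g)~`, so `(log f − log g)~ = A − B`. -/
theorem stmt13 (f g : ℝ → ℝ)
    (hf0 : ∀ θ, 0 ≤ f θ) (hg0 : ∀ θ, 0 ≤ g θ)
    (hf : IntegrableOn f (Ico (-Real.pi) Real.pi))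
    (hg : IntegrableOn g (Ico (-Real.pi) Real.pi))
    (hlogf : IntegrableOn (fun θ => Real.log (f θ)) (Ico (-Real.pi) Real.pi))
    (hlogg : IntegrableOn (fun θ => Real.log (g θ)) (Ico (-Real.pi) Real.pi))
    (A B : ℝ → ℝ) (hA : Measurable A) (hB : Measurable B)
    (F G : ℝ → ℂ)
    (hF : ∀ θ, F θ = (Real.sqrt (f θ) : ℂ) * Complex.exp (Complex.I * (A θ : ℂ) / 2))
    (hG : ∀ θ, G θ = (Real.sqrt (g θ) : ℂ) * Complex.exp (Complex.I * (B θ : ℂ) / 2)) :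
    2 * (∫ θ in Ico (-Real.pi) Real.pi,
        f θ * (1 - Real.cos ((A θ - B θ) / 2))) -
      4 * (∫ θ in Ico (-Real.pi) Real.pi, |f θ - g θ|) ≤
    ∫ θ in Ico (-Real.pi) Real.pi, ‖F θ - G θ‖ ^ 2 :=
  stmt13_general f g hf0 hg0 hf hg A B hA hB F G hF hG
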